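/- arXiv:2410.18720 — 2 statements merged into one kernel-verified Lean document; each statement's English description precedes it below -/
import Mathlib

section
/- Let ℒ : ℝ^{n×n} → ℝ be continuously differentiable, and let U : ℝ → ℝ^{n×r} and S : ℝ → ℝ^{r×r} be differentiable at a time t at which U(t) has orthonormal columns and S(t) is invertible, and let V ∈ ℝ^{n×r} be fixed. Write G := ∇ℒ(U(t)S(t)Vᵀ). If U′(t) = −(I − U(t)U(t)ᵀ) G V S(t)^{−1} and S′(t) = −U(t)ᵀ G V, then K(t) := U(t)S(t) satisfies K′(t) = −G V, which moreover equals the negative gradient of the map K ↦ ℒ(K Vᵀ) evaluated at K = U(t)S(t). In particular, the K-step dynamics can be evaluated without the factor S(t)^{−1}. -/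
open Matrix

attribute [local instance] Matrix.frobeniusNormedAddCommGroup Matrix.frobeniusNormedSpace

/-- The Frobenius inner product `⟨A,B⟩ = trace (Aᵀ * B)`. -/
noncomputable def frobInner {m k : Type*} [Fintype m] [Fintype k]
    (A B : Matrix m k ℝ) : ℝ := (Aᵀ * B).trace

/-- The continuous linear map `H ↦ ⟨G, H⟩` (Frobenius inner product against `G`),
used to express that `G` is the gradient of a function at a point. -/
noncomputable def frobCLM {m k : Type*} [Fintype m] [Fintype k] (G : Matrix m k ℝ) :
    Matrix m k ℝ →L[ℝ] ℝ :=
  LinearMap.toContinuousLinearMap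
    { toFun := fun H => (Gᵀ * H).trace
      map_add' := fun A B => by simp [Matrix.mul_add]
      map_smul' := fun c A => by simp [Matrix.mul_smul] }

/-- The tangent-space projection `P(U,V)Z = UUᵀZ + ZVVᵀ − UUᵀZVVᵀ`. -/
noncomputable def tanProj {n r : ℕ} (U V : Matrix (Fin n) (Fin r) ℝ)
    (Z : Matrix (Fin n) (Fin n) ℝ) : Matrix (Fin n) (Fin n) ℝ :=
  U * Uᵀ * Z + Z * (V * Vᵀ) - U * Uᵀ * Z * (V * Vᵀ)

noncomputable def matMulCLM {m k l : Type*} [Fintype m] [Fintype k] [Fintype l]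
    [DecidableEq m] [DecidableEq k] :
    Matrix m k ℝ →L[ℝ] Matrix k l ℝ →L[ℝ] Matrix m l ℝ :=
  LinearMap.toContinuousLinearMap
    { toFun := fun A => LinearMap.toContinuousLinearMap
        { toFun := fun B => A * B
          map_add' := fun B C => Matrix.mul_add A B C
          map_smul' := fun c B => (Matrix.mul_smul A c B).trans rfl }
      map_add' := fun A B => by ext C : 1; simp [Matrix.add_mul]
      map_smul' := fun c A => by ext B : 1; simp [Matrix.smul_mul] }

/-- With `V` fixed and `U(t)` orthonormal, `S(t)` invertible, if
`U′ = −(I − UUᵀ) G V S⁻¹` and `S′ = −Uᵀ G V` with `G = ∇ℒ(U(t)S(t)Vᵀ)`, then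
`K(t) = U(t)S(t)` satisfies `K′(t) = −G V`, and `G V` is moreover the gradient of the map
`K ↦ ℒ(K Vᵀ)` at `K = U(t)S(t)`; so the K-step dynamics need no factor `S(t)⁻¹`. -/
theorem K_step_dynamics (n r : ℕ)
    (L : Matrix (Fin n) (Fin n) ℝ → ℝ) (hL : ContDiff ℝ 1 L)
    (U : ℝ → Matrix (Fin n) (Fin r) ℝ) (S : ℝ → Matrix (Fin r) (Fin r) ℝ)
    (U' : Matrix (Fin n) (Fin r) ℝ) (S' : Matrix (Fin r) (Fin r) ℝ) (t : ℝ)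
    (hUd : HasDerivAt U U' t) (hSd : HasDerivAt S S' t)
    (hU : (U t)ᵀ * U t = 1) (hS : IsUnit (S t))
    (V : Matrix (Fin n) (Fin r) ℝ)
    (G : Matrix (Fin n) (Fin n) ℝ)
    (hG : HasFDerivAt L (frobCLM G) (U t * S t * Vᵀ))
    (hU' : U' = -((1 - U t * (U t)ᵀ) * G * V * (S t)⁻¹))
    (hS' : S' = -((U t)ᵀ * G * V)) :
    HasDerivAt (fun s : ℝ => U s * S s) (-(G * V)) t ∧
    HasFDerivAt (fun K : Matrix (Fin n) (Fin r) ℝ => L (K * Vᵀ)) (frobCLM (G * V))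
      (U t * S t) := by
  constructor
  · have hbil :=
      (matMulCLM (m := Fin n) (k := Fin r) (l := Fin r)).isBoundedBilinearMap
    have hmul := hbil.hasFDerivAt (U t, S t)
    have hK := hmul.comp_hasDerivAt t (hUd.prodMk hSd)
    have hinv : (S t)⁻¹ * S t = 1 :=
      Matrix.nonsing_inv_mul (S t) ((Matrix.isUnit_iff_isUnit_det _).mp hS)
    have hval : hbil.deriv (U t, S t) (U', S') = -(G * V) := by
      rw [hbil.deriv_apply]
      show U t * S' + U' * S t = -(G * V)
      subst hU' hS'
      simp only [Matrix.neg_mul, Matrix.mul_neg, Matrix.mul_assoc, hinv, Matrix.mul_one,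
        Matrix.sub_mul, Matrix.mul_sub, Matrix.one_mul]
      abel
    rw [hval] at hK
    exact hK
  · have hrmul : HasFDerivAt (fun K : Matrix (Fin n) (Fin r) ℝ => K * Vᵀ)
        ((matMulCLM (m := Fin n) (k := Fin r) (l := Fin n)).flip Vᵀ) (U t * S t) :=
      ((matMulCLM (m := Fin n) (k := Fin r) (l := Fin n)).flip Vᵀ).hasFDerivAt
    have hcomp := hG.comp (U t * S t) hrmul
    have : (frobCLM G).comp ((matMulCLM (m := Fin n) (k := Fin r) (l := Fin n)).flip Vᵀ)
        = frobCLM (G * V) := by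
      ext H
      show (Gᵀ * (H * Vᵀ)).trace = ((G * V)ᵀ * H).trace
      rw [Matrix.transpose_mul, ← Matrix.mul_assoc, Matrix.trace_mul_comm, Matrix.mul_assoc]
    exact hcomp.congr_fderiv this
end

section
/- (Cross-term bound, Step 2 of the local error bound in Theorem 3.) Let f : ℝ^{n×n} → ℝ^{n×n} be Lipschitz with constant L and bounded by B (Frobenius norm), and let W : [t₀, t₁] → ℝ^{n×n} solve W′(t) = f(W(t)) with W(t₀) = W₀ = U₀S₀V₀ᵀ, where U₀, V₀ ∈ ℝ^{n×r} have orthonormal columns and S₀ ∈ ℝ^{r×r}; set λ := t₁ − t₀ ≥ 0. Let Ũ, Ṽ ∈ ℝ^{n×r'} have orthonormal columns with Ũᵀ U₀ = 0 and Ṽᵀ V₀ = 0, and assume the tangent-defect bound ‖f(W₀) − P(U₀,V₀) f(W₀)‖ ≤ ε. Then ‖Ũᵀ W(t₁) Ṽ‖ ≤ λ ε + (L·B/2) λ². -/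
open Matrix

attribute [local instance] Matrix.frobeniusNormedAddCommGroup Matrix.frobeniusNormedSpace

lemma trace_eq_sum_prod {m k : Type*} [Fintype m] [Fintype k] (A B : Matrix m k ℝ) :
    (Aᵀ * B).trace = ∑ p : m × k, A p.1 p.2 * B p.1 p.2 := by
  simp only [Matrix.trace, Matrix.diag, Matrix.mul_apply, Matrix.transpose_apply]
  rw [← Finset.sum_product', Finset.univ_product_univ]
  exact Fintype.sum_equiv (Equiv.prodComm k m) _ _ fun p => rfl

lemma normsq_eq_trace {m k : Type*} [Fintype m] [Fintype k] (A : Matrix m k ℝ) :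
    ‖A‖ ^ 2 = (Aᵀ * A).trace := by
  rw [Matrix.frobenius_norm_def, ← Real.rpow_natCast (_ ^ (1/2:ℝ)) 2, ← Real.rpow_mul
    (by positivity), trace_eq_sum_prod]
  norm_num
  rw [← Finset.sum_product', Finset.univ_product_univ]
  apply Finset.sum_congr rfl
  intro p _
  simp [Real.rpow_two, sq_abs, sq]

lemma trace_le_norm_mul_norm {m k : Type*} [Fintype m] [Fintype k] (A B : Matrix m k ℝ) :
    (Aᵀ * B).trace ≤ ‖A‖ * ‖B‖ := by
  rw [trace_eq_sum_prod]
  have hcs := Real.sum_mul_le_sqrt_mul_sqrt Finset.univ (fun p : m × k => A p.1 p.2)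
    (fun p : m × k => B p.1 p.2)
  refine hcs.trans (le_of_eq ?_)
  have hn : ∀ (C : Matrix m k ℝ), Real.sqrt (∑ p : m × k, C p.1 p.2 ^ 2) = ‖C‖ := by
    intro C
    rw [show ‖C‖ = Real.sqrt (‖C‖^2) from (Real.sqrt_sq (norm_nonneg _)).symm,
      normsq_eq_trace, trace_eq_sum_prod]
    congr 1
    exact Finset.sum_congr rfl fun p _ => by rw [sq]
  rw [hn, hn]

lemma norm_conj_eq {n r' : ℕ} (U V : Matrix (Fin n) (Fin r') ℝ)
    (hU : Uᵀ * U = 1) (hV : Vᵀ * V = 1) (M : Matrix (Fin r') (Fin r') ℝ) :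
    ‖U * M * Vᵀ‖ = ‖M‖ := by
  have h2 : ‖U * M * Vᵀ‖ ^ 2 = ‖M‖ ^ 2 := by
    rw [normsq_eq_trace, normsq_eq_trace]
    have e : (U * M * Vᵀ)ᵀ * (U * M * Vᵀ) = V * (Mᵀ * M) * Vᵀ := by
      simp only [Matrix.transpose_mul, Matrix.transpose_transpose]
      calc V * (Mᵀ * Uᵀ) * (U * M * Vᵀ) = V * (Mᵀ * ((Uᵀ * U) * M)) * Vᵀ := by
            simp only [Matrix.mul_assoc]
          _ = V * (Mᵀ * M) * Vᵀ := by rw [hU, Matrix.one_mul]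
    rw [e, Matrix.trace_mul_cycle, ← Matrix.mul_assoc, hV, Matrix.one_mul]
  have := congrArg Real.sqrt h2
  simpa [Real.sqrt_sq, norm_nonneg] using this

lemma norm_compress_le {n r' : ℕ} (U V : Matrix (Fin n) (Fin r') ℝ)
    (hU : Uᵀ * U = 1) (hV : Vᵀ * V = 1) (Z : Matrix (Fin n) (Fin n) ℝ) :
    ‖Uᵀ * Z * V‖ ≤ ‖Z‖ := by
  set M := Uᵀ * Z * V with hM
  have key : ‖M‖ ^ 2 ≤ ‖Z‖ * ‖M‖ := by
    rw [normsq_eq_trace]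
    have e : Mᵀ * M = Vᵀ * (Zᵀ * U * M) := by
      simp only [hM, Matrix.transpose_mul, Matrix.transpose_transpose, Matrix.mul_assoc]
    rw [e, Matrix.trace_mul_comm, Matrix.mul_assoc, Matrix.mul_assoc,
      ← Matrix.mul_assoc U M Vᵀ]
    calc (Zᵀ * (U * M * Vᵀ)).trace ≤ ‖Z‖ * ‖U * M * Vᵀ‖ := trace_le_norm_mul_norm _ _
      _ = ‖Z‖ * ‖M‖ := by rw [norm_conj_eq U V hU hV M]
  rcases eq_or_lt_of_le (norm_nonneg M) with h0 | h0
  · rw [← h0]; exact norm_nonneg Z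
  · nlinarith

/-- cross-term bound, Step 2 of the local error bound in Theorem 3: for the flow
`Ẇ = f(W)` with `f` `K`-Lipschitz and bounded by `B`, `W(t₀) = U₀S₀V₀ᵀ` with `U₀, V₀`
orthonormal, augmentations `Ũ, Ṽ` orthonormal and orthogonal to `U₀, V₀`, and tangent defect
`‖f(W₀) − P(U₀,V₀)f(W₀)‖ ≤ ε`, one has `‖Ũᵀ W(t₁) Ṽ‖ ≤ λε + (K·B/2)λ²` with `λ = t₁ − t₀`. -/
theorem local_error_cross_term (n r r' : ℕ)
    (f : Matrix (Fin n) (Fin n) ℝ → Matrix (Fin n) (Fin n) ℝ)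
    (K : NNReal) (hf : LipschitzWith K f)
    (B : ℝ) (hB : ∀ Z : Matrix (Fin n) (Fin n) ℝ, ‖f Z‖ ≤ B)
    (t₀ t₁ : ℝ) (ht : t₀ ≤ t₁)
    (W : ℝ → Matrix (Fin n) (Fin n) ℝ)
    (hW : ∀ t ∈ Set.Icc t₀ t₁, HasDerivAt W (f (W t)) t)
    (U₀ V₀ : Matrix (Fin n) (Fin r) ℝ) (S₀ : Matrix (Fin r) (Fin r) ℝ)
    (hU₀ : U₀ᵀ * U₀ = 1) (hV₀ : V₀ᵀ * V₀ = 1)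
    (hW₀ : W t₀ = U₀ * S₀ * V₀ᵀ)
    (Ua Va : Matrix (Fin n) (Fin r') ℝ)
    (hUa : Uaᵀ * Ua = 1) (hVa : Vaᵀ * Va = 1)
    (hUaU₀ : Uaᵀ * U₀ = 0) (hVaV₀ : Vaᵀ * V₀ = 0)
    (ε : ℝ) (hdefect : ‖f (W t₀) - tanProj U₀ V₀ (f (W t₀))‖ ≤ ε) :
    ‖Uaᵀ * W t₁ * Va‖ ≤ (t₁ - t₀) * ε + (K : ℝ) * B / 2 * (t₁ - t₀) ^ 2 := by
  have hV₀Va : V₀ᵀ * Va = 0 := by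
    have := congrArg Matrix.transpose hVaV₀
    simpa using this
  have hB0 : 0 ≤ B := le_trans (norm_nonneg _) (hB 0)
  -- the compressed curve and its derivative
  set L : Matrix (Fin n) (Fin n) ℝ →L[ℝ] Matrix (Fin r') (Fin r') ℝ :=
    LinearMap.toContinuousLinearMap
      { toFun := fun Z => Uaᵀ * Z * Va
        map_add' := fun A B' => by simp [Matrix.mul_add, Matrix.add_mul]
        map_smul' := fun c A => by simp [Matrix.mul_smul, Matrix.smul_mul] } with hL
  have hLapp : ∀ Z, L Z = Uaᵀ * Z * Va := fun Z => rfl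
  have hg : ∀ t ∈ Set.Icc t₀ t₁,
      HasDerivAt (fun s => Uaᵀ * W s * Va) (Uaᵀ * f (W t) * Va) t := by
    intro t htt
    have := L.hasFDerivAt.comp_hasDerivAt t (hW t htt)
    exact this
  -- bound on the drift of W
  have hWd : ∀ x ∈ Set.Icc t₀ t₁, ‖W x - W t₀‖ ≤ B * (x - t₀) := by
    intro x hx
    have := (convex_Icc t₀ t₁).norm_image_sub_le_of_norm_hasDerivWithin_le
      (f' := fun s => f (W s)) (fun s hs => (hW s hs).hasDerivWithinAt)
      (fun s _ => hB (W s)) (Set.left_mem_Icc.2 ht) hx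
    calc ‖W x - W t₀‖ ≤ B * ‖x - t₀‖ := this
      _ = B * (x - t₀) := by rw [Real.norm_eq_abs, abs_of_nonneg (by linarith [hx.1])]
  -- the defect bound at t₀
  have hzero : Uaᵀ * tanProj U₀ V₀ (f (W t₀)) * Va = 0 := by
    set G := f (W t₀)
    simp only [tanProj, Matrix.mul_add, Matrix.add_mul, Matrix.mul_sub, Matrix.sub_mul,
      ← Matrix.mul_assoc]
    rw [hUaU₀]
    rw [Matrix.mul_assoc (Uaᵀ * G * V₀) V₀ᵀ Va, hV₀Va]
    simp
  have hd0 : ‖Uaᵀ * f (W t₀) * Va‖ ≤ ε := by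
    have e : Uaᵀ * f (W t₀) * Va
        = Uaᵀ * (f (W t₀) - tanProj U₀ V₀ (f (W t₀))) * Va := by
      rw [Matrix.mul_sub, Matrix.sub_mul, hzero, sub_zero]
    rw [e]
    exact (norm_compress_le Ua Va hUa hVa _).trans hdefect
  -- the derivative bound
  have hbound : ∀ x ∈ Set.Ico t₀ t₁,
      ‖Uaᵀ * f (W x) * Va‖ ≤ ε + (K : ℝ) * B * (x - t₀) := by
    intro x hx
    have hx' : x ∈ Set.Icc t₀ t₁ := ⟨hx.1, hx.2.le⟩
    have split : Uaᵀ * f (W x) * Va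
        = Uaᵀ * f (W t₀) * Va + Uaᵀ * (f (W x) - f (W t₀)) * Va := by
      rw [Matrix.mul_sub, Matrix.sub_mul]; abel
    rw [split]
    refine (norm_add_le _ _).trans (add_le_add hd0 ?_)
    refine (norm_compress_le Ua Va hUa hVa _).trans ?_
    calc ‖f (W x) - f (W t₀)‖ ≤ (K : ℝ) * ‖W x - W t₀‖ := by
          simpa [dist_eq_norm] using hf.dist_le_mul (W x) (W t₀)
      _ ≤ (K : ℝ) * (B * (x - t₀)) := by
          exact mul_le_mul_of_nonneg_left (hWd x hx') K.coe_nonneg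
      _ = (K : ℝ) * B * (x - t₀) := by ring
  -- initial value
  have hg0 : Uaᵀ * W t₀ * Va = 0 := by
    rw [hW₀, ← Matrix.mul_assoc, ← Matrix.mul_assoc, hUaU₀,
      Matrix.zero_mul, Matrix.zero_mul, Matrix.zero_mul]
  -- boundary function
  set Bf : ℝ → ℝ := fun t => ε * (t - t₀) + (K : ℝ) * B / 2 * (t - t₀) ^ 2 with hBf
  have hBf' : ∀ t, HasDerivAt Bf (ε + (K : ℝ) * B * (t - t₀)) t := by
    intro t
    have h1 : HasDerivAt (fun s => s - t₀) 1 t := (hasDerivAt_id t).sub_const t₀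
    have := ((h1.const_mul ε).add (((h1.pow 2)).const_mul ((K : ℝ) * B / 2)))
    refine this.congr_deriv ?_
    norm_num
    ring
  have main := image_norm_le_of_norm_deriv_right_le_deriv_boundary
    (f := fun s => Uaᵀ * W s * Va) (a := t₀) (b := t₁)
    (f' := fun s => Uaᵀ * f (W s) * Va)
    (fun s hs => (hg s hs).continuousAt.continuousWithinAt)
    (fun s hs => (hg s ⟨hs.1, hs.2.le⟩).hasDerivWithinAt)
    (B := Bf) (B' := fun t => ε + (K : ℝ) * B * (t - t₀))
    (by simp [hg0, hBf]) hBf' hbound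
  have := main (Set.right_mem_Icc.2 ht)
  calc ‖Uaᵀ * W t₁ * Va‖ ≤ Bf t₁ := this
    _ = (t₁ - t₀) * ε + (K : ℝ) * B / 2 * (t₁ - t₀) ^ 2 := by rw [hBf]; ring
end
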